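/- Let Γ' be a finite simple 3-connected graph and let Γ be its cycle expansion. Then Γ is 3-connected. -/

import Mathlib

open SimpleGraph

/-- The cycle expansion of a simple graph `G'` determined by a rotation permutation `σ`
on the darts of `G'`: each vertex is replaced by a cycle through its darts. Vertices of
the expansion are darts of `G'`; the original (painted) edges join a dart to its
reverse, and the new edges join consecutive darts in the cyclic order `σ` around each
vertex. -/
def cycleExpansion {V' : Type*} (G' : SimpleGraph V') (σ : Equiv.Perm G'.Dart) :
    SimpleGraph G'.Dart where
  Adj d d' := d' = d.symm ∨ (d ≠ d' ∧ d.toProd.1 = d'.toProd.1 ∧ (σ d = d' ∨ σ d' = d))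
  symm := by
    constructor
    intro d d' h
    rcases h with h | ⟨hne, hfst, hor⟩
    · left; rw [h, SimpleGraph.Dart.symm_symm]
    · right; exact ⟨hne.symm, hfst.symm, hor.symm⟩
  loopless := by
    constructor
    intro d h
    rcases h with h | ⟨hne, _⟩
    · exact (SimpleGraph.Dart.symm_ne d) h.symm
    · exact hne rfl

/-- `σ` is a valid rotation for the cycle expansion: it preserves the source vertex of
darts and acts as a single cycle on the darts at each vertex (so that each vertex of
degree `n` is replaced by an `n`-cycle attached bijectively to its incident edges). -/
def IsRotation {V' : Type*} (G' : SimpleGraph V') (σ : Equiv.Perm G'.Dart) : Prop :=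
  (∀ d, (σ d).toProd.1 = d.toProd.1) ∧
    ∀ d d' : G'.Dart, d.toProd.1 = d'.toProd.1 → ∃ n : ℕ, (σ ^ n) d = d'

/-- A graph is 3-connected: it has more than 3 vertices, and removing any set of at
most two vertices leaves it connected. -/
def ThreeConnected {V : Type*} [Fintype V] (G : SimpleGraph V) : Prop :=
  3 < Fintype.card V ∧
    ∀ S : Finset V, S.card ≤ 2 → ((G.induce ((↑S : Set V)ᶜ)).Connected)

/-!
Delete a set `S` of at most two darts and let `A` be the set of their base vertices. Then
`|A| ≤ 2`, so `G' - A` is connected. A vertex outside `A` keeps its whole cycle, and the cycles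
of the two ends of an edge are joined by its painted edge, so a path of `G' - A` lifts to the
expansion. A surviving dart `d` at a vertex `v ∈ A` reaches a vertex outside `A`: along its
painted edge if its head lies outside `A`; otherwise `A` consists of the two ends of `d`, so `v`
lost only one dart, its cycle minus that dart is still a path, and it leads to one of the at
least three darts at `v` whose painted edge leaves `A`.
-/

namespace Equiv.Perm

variable {α : Type*} (σ : Equiv.Perm α)

/-- Take the first visit of `y`: a visit of `r` before it would be followed by a return to
`σ r`. -/
theorem exists_pow_apply_eq_forall_le_ne {r y : α} (h : ∃ n, (σ ^ n) (σ r) = y)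
    (hy : y ≠ r) :
    ∃ n, (σ ^ n) (σ r) = y ∧ ∀ i ≤ n, (σ ^ i) (σ r) ≠ r := by
  classical
  refine ⟨Nat.find h, Nat.find_spec h, fun i hi hir => ?_⟩
  have hlt : i < Nat.find h :=
    lt_of_le_of_ne hi fun hin => hy (by rw [← Nat.find_spec h, ← hin, hir])
  have hret : (σ ^ (i + 1)) (σ r) = σ r := by rw [pow_succ', mul_apply, hir]
  refine Nat.find_min h (m := Nat.find h - (i + 1)) (by omega) ?_
  calc (σ ^ (Nat.find h - (i + 1))) (σ r)
      = (σ ^ (Nat.find h - (i + 1))) ((σ ^ (i + 1)) (σ r)) := by rw [hret]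
    _ = (σ ^ Nat.find h) (σ r) := by rw [← mul_apply, ← pow_add, Nat.sub_add_cancel hlt]
    _ = y := Nat.find_spec h

end Equiv.Perm

namespace SimpleGraph

theorem reachable_induce_of_pow_apply_eq {α : Type*} {G : SimpleGraph α} {s : Set α}
    (σ : Equiv.Perm α) (hG : ∀ a, σ a ≠ a → G.Adj a (σ a)) {x y : α} {hx : x ∈ s}
    {hy : y ∈ s}
    {n : ℕ} (hn : (σ ^ n) x = y) (hs : ∀ i ≤ n, (σ ^ i) x ∈ s) :
    (G.induce s).Reachable ⟨x, hx⟩ ⟨y, hy⟩ := by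
  induction n generalizing y with
  | zero =>
    obtain rfl : x = y := hn
    rfl
  | succ n ih =>
    subst hn
    refine (ih (hy := hs n n.le_succ) rfl fun i hi => hs i (by omega)).trans ?_
    have hsucc : (σ ^ (n + 1)) x = σ ((σ ^ n) x) := by rw [pow_succ', Equiv.Perm.mul_apply]
    by_cases hfix : σ ((σ ^ n) x) = (σ ^ n) x
    · have heq : (⟨_, hs n n.le_succ⟩ : s) = ⟨_, hy⟩ := Subtype.ext (hsucc.trans hfix).symm
      exact heq ▸ Reachable.refl _
    · exact Adj.reachable (show G.Adj _ _ from hsucc ▸ hG _ hfix)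

end SimpleGraph

section CycleExpansion

variable {V' : Type*} {G' : SimpleGraph V'} {σ : Equiv.Perm G'.Dart}

theorem cycleExpansion_adj_symm (d : G'.Dart) : (cycleExpansion G' σ).Adj d d.symm :=
  Or.inl rfl

namespace IsRotation

variable (hσ : IsRotation G' σ)
include hσ

theorem fst_pow_apply (n : ℕ) (d : G'.Dart) : ((σ ^ n) d).fst = d.fst := by
  induction n with
  | zero => rfl
  | succ n ih => rw [pow_succ', Equiv.Perm.mul_apply, hσ.1, ih]

theorem cycleExpansion_adj_apply {d : G'.Dart} (h : σ d ≠ d) :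
    (cycleExpansion G' σ).Adj d (σ d) :=
  Or.inr ⟨h.symm, (hσ.1 d).symm, Or.inl rfl⟩

theorem reachable_of_fst_eq {s : Set G'.Dart} {v : V'} (hs : {r ∈ s | r.fst = v}.Subsingleton)
    {d d' : G'.Dart} {hd : d ∈ sᶜ} {hd' : d' ∈ sᶜ} (hdv : d.fst = v) (hdv' : d'.fst = v) :
    ((cycleExpansion G' σ).induce sᶜ).Reachable ⟨d, hd⟩ ⟨d', hd'⟩ := by
  have hadj : ∀ a, σ a ≠ a → (cycleExpansion G' σ).Adj a (σ a) :=
    fun _ => hσ.cycleExpansion_adj_apply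
  by_cases hr : ∃ r ∈ s, r.fst = v
  · obtain ⟨r, hrs, hrv⟩ := hr
    have from_succ : ∀ e (he : e ∈ sᶜ), e.fst = v →
        ∃ h, ((cycleExpansion G' σ).induce sᶜ).Reachable ⟨σ r, h⟩ ⟨e, he⟩ := by
      intro e he hev
      obtain ⟨n, hn, hne⟩ := σ.exists_pow_apply_eq_forall_le_ne
        (hσ.2 (σ r) e (by rw [hσ.1, hrv, hev])) (fun h => he (h ▸ hrs))
      have hmem : ∀ i ≤ n, (σ ^ i) (σ r) ∈ sᶜ := fun i hi his =>
        hne i hi (hs ⟨his, by rw [hσ.fst_pow_apply, hσ.1, hrv]⟩ ⟨hrs, hrv⟩)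
      exact ⟨hmem 0 (Nat.zero_le _), reachable_induce_of_pow_apply_eq σ hadj hn hmem⟩
    obtain ⟨_, hrd⟩ := from_succ d hd hdv
    obtain ⟨_, hrd'⟩ := from_succ d' hd' hdv'
    exact hrd.symm.trans hrd'
  · push Not at hr
    obtain ⟨n, hn⟩ := hσ.2 d d' (hdv.trans hdv'.symm)
    exact reachable_induce_of_pow_apply_eq σ hadj hn fun i _ hi =>
      hr _ hi (by rw [hσ.fst_pow_apply, hdv])

theorem reachable_of_reachable_fst {s : Set G'.Dart} {u w : ↥((·.fst) '' s)ᶜ}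
    (h : (G'.induce ((·.fst) '' s)ᶜ).Reachable u w) {d d' : G'.Dart} {hd : d ∈ sᶜ}
    {hd' : d' ∈ sᶜ} (hu : d.fst = u) (hw : d'.fst = w) :
    ((cycleExpansion G' σ).induce sᶜ).Reachable ⟨d, hd⟩ ⟨d', hd'⟩ := by
  have intact : ∀ x : ↥((·.fst) '' s)ᶜ, {r ∈ s | r.fst = x}.Subsingleton :=
    fun x r hr _ _ => (x.2 ⟨r, hr⟩).elim
  obtain ⟨p⟩ := h
  induction p generalizing d with
  | nil => exact hσ.reachable_of_fst_eq (intact _) hu hw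
  | @cons a b _ hab _ ih =>
    let e : G'.Dart := ⟨(a, b), hab⟩
    have he : e ∈ sᶜ := fun h => a.2 ⟨e, h, rfl⟩
    have he' : e.symm ∈ sᶜ := fun h => b.2 ⟨e.symm, h, rfl⟩
    exact (hσ.reachable_of_fst_eq (hd' := he) (intact a) hu rfl).trans
      ((induce_adj.2 (cycleExpansion_adj_symm e)).reachable.trans (ih (hd := he') rfl hw))

theorem exists_reachable_fst_notMem [G'.LocallyFinite] {S : Finset G'.Dart} (hS : S.card ≤ 2)
    {d : G'.Dart} (hd : d ∉ S) (hdeg : 3 ≤ G'.degree d.fst) :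
    ∃ e, ∃ he : e.fst ∉ (·.fst) '' (S : Set G'.Dart),
      ((cycleExpansion G' σ).induce (S : Set G'.Dart)ᶜ).Reachable ⟨d, hd⟩
        ⟨e, fun h => he ⟨e, h, rfl⟩⟩ := by
  classical
  by_cases hv : d.fst ∈ (·.fst) '' (S : Set G'.Dart)
  swap
  · exact ⟨d, hv, .rfl⟩
  by_cases hw : d.snd ∈ (·.fst) '' (S : Set G'.Dart)
  swap
  · exact ⟨d.symm, hw, (induce_adj.2 (cycleExpansion_adj_symm d)).reachable⟩
  obtain ⟨r, hr, hrv⟩ := hv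
  obtain ⟨r', hr', hrw⟩ := hw
  have hS' : ∀ x ∈ S, x = r ∨ x = r' := by
    have hrr' : r ≠ r' := fun h => d.fst_ne_snd (by rw [← hrv, ← hrw, h])
    have hSeq : {r, r'} = S := Finset.eq_of_subset_of_card_le
      (Finset.insert_subset hr (Finset.singleton_subset_iff.2 hr')) (by rwa [Finset.card_pair hrr'])
    simp [← hSeq]
  obtain ⟨u, hu, hune⟩ :
      ∃ u ∈ G'.neighborFinset d.fst, u ∉ ({d.snd, r.snd} : Finset V') := by
    refine Finset.exists_mem_notMem_of_card_lt_card ?_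
    rw [card_neighborFinset_eq_degree]
    exact Finset.card_le_two.trans_lt hdeg
  simp only [Finset.mem_insert, Finset.mem_singleton, not_or] at hune
  have hadj : G'.Adj d.fst u := (mem_neighborFinset _ _ _).1 hu
  let e : G'.Dart := ⟨(d.fst, u), hadj⟩
  have he : e ∉ S := fun h => by
    rcases hS' e h with h | h
    · exact hune.2 (by rw [← h])
    · exact d.fst_ne_snd (by rw [← hrw, ← h])
  have heA : e.symm.fst ∉ (·.fst) '' (S : Set G'.Dart) := by
    rintro ⟨x, hx, hxu⟩
    rcases hS' x hx with rfl | rfl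
    · exact G'.ne_of_adj hadj (hrv.symm.trans hxu)
    · exact hune.1 (hrw.symm.trans hxu).symm
  have hat : {x ∈ (S : Set G'.Dart) | x.fst = d.fst}.Subsingleton := by
    refine Set.subsingleton_of_forall_eq r fun x ⟨hx, hxv⟩ => (hS' x hx).resolve_right ?_
    rintro rfl
    exact d.fst_ne_snd (hxv.symm.trans hrw)
  exact ⟨e.symm, heA, (hσ.reachable_of_fst_eq (hd' := he) hat rfl rfl).trans
    (induce_adj.2 (cycleExpansion_adj_symm e)).reachable⟩

end IsRotation

end CycleExpansion

theorem cycleExpansion_threeConnected_general {V' : Type*} [Fintype V']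
    (G' : SimpleGraph V') [DecidableRel G'.Adj]
    (hconn : ThreeConnected G')
    (hdeg : ∀ v : V', 3 ≤ G'.degree v)
    (σ : Equiv.Perm G'.Dart) (hσ : IsRotation G' σ) :
    ThreeConnected (cycleExpansion G' σ) := by
  classical
  have hcard : 12 ≤ Fintype.card G'.Dart := by
    rw [dart_card_eq_sum_degrees]
    calc 12 ≤ Fintype.card V' * 3 := by have := hconn.1; omega
      _ ≤ ∑ v, G'.degree v := by
        simpa using Finset.card_nsmul_le_sum Finset.univ _ 3 fun v _ => hdeg v
  refine ⟨by omega, fun S hS => ?_⟩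
  have hA : (G'.induce ((·.fst) '' (S : Set G'.Dart))ᶜ).Connected := by
    have := hconn.2 (S.image (·.fst)) (Finset.card_image_le.trans hS)
    rwa [Finset.coe_image] at this
  obtain ⟨d₀, -, hd₀⟩ :=
    Finset.exists_mem_notMem_of_card_lt_card (s := S) (by rw [Finset.card_univ]; omega)
  refine (connected_iff _).2 ⟨fun ⟨d, hd⟩ ⟨d', hd'⟩ => ?_, ⟨⟨d₀, hd₀⟩⟩⟩
  obtain ⟨e, he, hde⟩ := hσ.exists_reachable_fst_notMem hS hd (hdeg _)
  obtain ⟨e', he', hde'⟩ := hσ.exists_reachable_fst_notMem hS hd' (hdeg _)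
  exact hde.trans ((hσ.reachable_of_reachable_fst
    (hA.preconnected ⟨_, he⟩ ⟨_, he'⟩) rfl rfl).trans hde'.symm)

/-- The cycle expansion of a finite simple 3-connected graph is
3-connected. -/
theorem cycleExpansion_threeConnected {V' : Type*} [Fintype V'] [DecidableEq V']
    (G' : SimpleGraph V') [DecidableRel G'.Adj]
    (hconn : ThreeConnected G')
    (hdeg : ∀ v : V', 3 ≤ G'.degree v)
    (σ : Equiv.Perm G'.Dart) (hσ : IsRotation G' σ) :
    ThreeConnected (cycleExpansion G' σ) :=
  cycleExpansion_threeConnected_general G' hconn hdeg σ hσ
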